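/- If M →_ε̂ N in system F (commuting conversion for the defined disjunction), then M →²_{ϱβ} N: each ε̂-step equals one ϱ-step followed by one β-step. Concretely, for the type-application case: M(∀Y.C')⟨λx:A.P, λy:B.Q⟩C'' →_ϱ (ΛY.MC'⟨λx:A.PY, λy:B.QY⟩)C'' →_β M([C''/Y]C')⟨λx:A.PC'', λy:B.QC''⟩. -/
import Mathlib


inductive Ty : Type
  | var : ℕ → Ty
  | imp : Ty → Ty → Ty
  | conj : Ty → Ty → Ty
  | all : Ty → Ty
  deriving DecidableEq

namespace Ty

/-- Shift (by one) the free type variables of a type at or above cutoff `c` (de Bruijn). -/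
def shift (c : ℕ) : Ty → Ty
  | var n => if n < c then var n else var (n + 1)
  | imp a b => imp (a.shift c) (b.shift c)
  | conj a b => conj (a.shift c) (b.shift c)
  | all a => all (a.shift (c + 1))

/-- Capture-avoiding substitution of `B` for type variable `d` (de Bruijn). -/
def subst : Ty → ℕ → Ty → Ty
  | var n, d, B => if n < d then var n else if n = d then (Ty.shift 0)^[d] B else var (n - 1)
  | imp a b, d, B => imp (a.subst d B) (b.subst d B)
  | conj a b, d, B => conj (a.subst d B) (b.subst d B)
  | all a, d, B => all (a.subst (d + 1) B)

/-- Russell–Prawitz disjunction `A ∨̂ B := ∀X.((A ⊃ X) ∧ (B ⊃ X)) ⊃ X`. -/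
def orr (A B : Ty) : Ty :=
  all (imp (conj (imp (A.shift 0) (var 0)) (imp (B.shift 0) (var 0))) (var 0))

/-- Russell–Prawitz absurdity `⊥̂ := ∀X.X`. -/
def bot : Ty := all (var 0)

end Ty

inductive Tm : Type
  | var : ℕ → Tm
  | lam : Ty → Tm → Tm
  | app : Tm → Tm → Tm
  | pair : Tm → Tm → Tm
  | proj1 : Tm → Tm
  | proj2 : Tm → Tm
  | tlam : Tm → Tm
  | tapp : Tm → Ty → Tm

namespace Tm

/-- Shift the free term variables at or above cutoff `c`. -/
def shiftVar (c : ℕ) : Tm → Tm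
  | var n => if n < c then var n else var (n + 1)
  | lam A M => lam A (M.shiftVar (c + 1))
  | app M N => app (M.shiftVar c) (N.shiftVar c)
  | pair M N => pair (M.shiftVar c) (N.shiftVar c)
  | proj1 M => proj1 (M.shiftVar c)
  | proj2 M => proj2 (M.shiftVar c)
  | tlam M => tlam (M.shiftVar c)
  | tapp M B => tapp (M.shiftVar c) B

/-- Shift the free type variables (in types occurring in a term) at or above cutoff `c`. -/
def shiftTy (c : ℕ) : Tm → Tm
  | var n => var n
  | lam A M => lam (A.shift c) (M.shiftTy c)
  | app M N => app (M.shiftTy c) (N.shiftTy c)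
  | pair M N => pair (M.shiftTy c) (N.shiftTy c)
  | proj1 M => proj1 (M.shiftTy c)
  | proj2 M => proj2 (M.shiftTy c)
  | tlam M => tlam (M.shiftTy (c + 1))
  | tapp M B => tapp (M.shiftTy c) (B.shift c)

/-- Swap the term variables `c` and `c+1`. -/
def swapVar (c : ℕ) : Tm → Tm
  | var n => if n = c then var (c + 1) else if n = c + 1 then var c else var n
  | lam A M => lam A (M.swapVar (c + 1))
  | app M N => app (M.swapVar c) (N.swapVar c)
  | pair M N => pair (M.swapVar c) (N.swapVar c)
  | proj1 M => proj1 (M.swapVar c)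
  | proj2 M => proj2 (M.swapVar c)
  | tlam M => tlam (M.swapVar c)
  | tapp M B => tapp (M.swapVar c) B

/-- Capture-avoiding substitution of term `N` for term variable `d`. -/
def substVar : Tm → ℕ → Tm → Tm
  | var n, d, N => if n < d then var n else if n = d then (Tm.shiftVar 0)^[d] N else var (n - 1)
  | lam A M, d, N => lam A (M.substVar (d + 1) N)
  | app M P, d, N => app (M.substVar d N) (P.substVar d N)
  | pair M P, d, N => pair (M.substVar d N) (P.substVar d N)
  | proj1 M, d, N => proj1 (M.substVar d N)
  | proj2 M, d, N => proj2 (M.substVar d N)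
  | tlam M, d, N => tlam (M.substVar d (N.shiftTy 0))
  | tapp M B, d, N => tapp (M.substVar d N) B

/-- Capture-avoiding substitution of type `B` for type variable `d` in a term. -/
def substTy : Tm → ℕ → Ty → Tm
  | var n, _, _ => var n
  | lam A M, d, B => lam (A.subst d B) (M.substTy d B)
  | app M N, d, B => app (M.substTy d B) (N.substTy d B)
  | pair M N, d, B => pair (M.substTy d B) (N.substTy d B)
  | proj1 M, d, B => proj1 (M.substTy d B)
  | proj2 M, d, B => proj2 (M.substTy d B)
  | tlam M, d, B => tlam (M.substTy (d + 1) B)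
  | tapp M C, d, B => tapp (M.substTy d B) (C.subst d B)

end Tm

/-- Compatible closure of a root relation on terms. -/
inductive Compat (R : Tm → Tm → Prop) : Tm → Tm → Prop
  | root {M N} : R M N → Compat R M N
  | lam (A) {M N} : Compat R M N → Compat R (.lam A M) (.lam A N)
  | app1 {M M'} (N) : Compat R M M' → Compat R (.app M N) (.app M' N)
  | app2 (M) {N N'} : Compat R N N' → Compat R (.app M N) (.app M N')
  | pair1 {M M'} (N) : Compat R M M' → Compat R (.pair M N) (.pair M' N)
  | pair2 (M) {N N'} : Compat R N N' → Compat R (.pair M N) (.pair M N')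
  | proj1 {M M'} : Compat R M M' → Compat R (.proj1 M) (.proj1 M')
  | proj2 {M M'} : Compat R M M' → Compat R (.proj2 M) (.proj2 M')
  | tlam {M M'} : Compat R M M' → Compat R (.tlam M) (.tlam M')
  | tapp {M M'} (B) : Compat R M M' → Compat R (.tapp M B) (.tapp M' B)

/-- Root β-reduction rules of system F. -/
inductive Beta : Tm → Tm → Prop
  | imp (A M N) : Beta (.app (.lam A M) N) (M.substVar 0 N)
  | conj1 (M N) : Beta (.proj1 (.pair M N)) M
  | conj2 (M N) : Beta (.proj2 (.pair M N)) N
  | all (M B) : Beta (.tapp (.tlam M) B) (M.substTy 0 B)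

/-- Root η-reduction rules of system F. -/
inductive Eta : Tm → Tm → Prop
  | imp (A M) : Eta (.lam A (.app (M.shiftVar 0) (.var 0))) M
  | conj (M) : Eta (.pair (.proj1 M) (.proj2 M)) M
  | all (M) : Eta (.tlam (.tapp (M.shiftTy 0) (.var 0))) M

/-- Root ϱ-atomization rules: `M C ⟨λx:A.P, λy:B.Q⟩` with `C` non-atomic. -/
inductive RhoHat : Tm → Tm → Prop
  | imp (M C₁ C₂ A P B Q) :
      RhoHat (.app (.tapp M (.imp C₁ C₂)) (.pair (.lam A P) (.lam B Q)))
        (.lam C₁ (.app (.tapp (M.shiftVar 0) C₂)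
          (.pair (.lam A (.app (P.shiftVar 1) (.var 1)))
                 (.lam B (.app (Q.shiftVar 1) (.var 1))))))
  | conj (M C₁ C₂ A P B Q) :
      RhoHat (.app (.tapp M (.conj C₁ C₂)) (.pair (.lam A P) (.lam B Q)))
        (.pair (.app (.tapp M C₁) (.pair (.lam A (.proj1 P)) (.lam B (.proj1 Q))))
               (.app (.tapp M C₂) (.pair (.lam A (.proj2 P)) (.lam B (.proj2 Q)))))
  | all (M D A P B Q) :
      RhoHat (.app (.tapp M (.all D)) (.pair (.lam A P) (.lam B Q)))
        (.tlam (.app (.tapp (M.shiftTy 0) D)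
          (.pair (.lam (A.shift 0) (.tapp (P.shiftTy 0) (.var 0)))
                 (.lam (B.shift 0) (.tapp (Q.shiftTy 0) (.var 0))))))

/-- Root ρ-atomization rules: `M C` with `C` non-atomic. -/
inductive Rho : Tm → Tm → Prop
  | imp (M C₁ C₂) : Rho (.tapp M (.imp C₁ C₂)) (.lam C₁ (.tapp (M.shiftVar 0) C₂))
  | conj (M C₁ C₂) : Rho (.tapp M (.conj C₁ C₂)) (.pair (.tapp M C₁) (.tapp M C₂))
  | all (M D) : Rho (.tapp M (.all D)) (.tlam (.tapp (M.shiftTy 0) D))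

/-- Root ε̂-commuting-conversion rules for the defined disjunction. -/
inductive EpsHat : Tm → Tm → Prop
  | imp (M C₁ C₂ A P B Q N) :
      EpsHat (.app (.app (.tapp M (.imp C₁ C₂)) (.pair (.lam A P) (.lam B Q))) N)
        (.app (.tapp M C₂)
          (.pair (.lam A (.app P (N.shiftVar 0))) (.lam B (.app Q (N.shiftVar 0)))))
  | conj1 (M C₁ C₂ A P B Q) :
      EpsHat (.proj1 (.app (.tapp M (.conj C₁ C₂)) (.pair (.lam A P) (.lam B Q))))
        (.app (.tapp M C₁) (.pair (.lam A (.proj1 P)) (.lam B (.proj1 Q))))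
  | conj2 (M C₁ C₂ A P B Q) :
      EpsHat (.proj2 (.app (.tapp M (.conj C₁ C₂)) (.pair (.lam A P) (.lam B Q))))
        (.app (.tapp M C₂) (.pair (.lam A (.proj2 P)) (.lam B (.proj2 Q))))
  | all (M C' A P B Q C'') :
      EpsHat (.tapp (.app (.tapp M (.all C')) (.pair (.lam A P) (.lam B Q))) C'')
        (.app (.tapp M (C'.subst 0 C''))
          (.pair (.lam A (.tapp P C'')) (.lam B (.tapp Q C''))))


theorem Ty.subst_shift (A : Ty) : ∀ (c : ℕ) (B : Ty), (A.shift c).subst c B = A := by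
  induction A with
  | var n =>
    intro c B
    simp only [Ty.shift]
    split
    · rename_i h; simp [Ty.subst, h]
    · simp only [Ty.subst]
      have h1 : ¬ (n + 1 < c) := by omega
      have h2 : ¬ (n + 1 = c) := by omega
      simp [h1, h2]
  | imp a b iha ihb => intro c B; simp [Ty.shift, Ty.subst, iha, ihb]
  | conj a b iha ihb => intro c B; simp [Ty.shift, Ty.subst, iha, ihb]
  | all a ih => intro c B; simp [Ty.shift, Ty.subst, ih]

theorem Tm.substVar_shiftVar (M : Tm) : ∀ (c : ℕ) (N : Tm),
    (M.shiftVar c).substVar c N = M := by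
  induction M with
  | var n =>
    intro c N
    simp only [Tm.shiftVar]
    split
    · rename_i h; simp [Tm.substVar, h]
    · simp only [Tm.substVar]
      have h1 : ¬ (n + 1 < c) := by omega
      have h2 : ¬ (n + 1 = c) := by omega
      simp [h1, h2]
  | lam A M ih => intro c N; simp [Tm.shiftVar, Tm.substVar, ih]
  | app M P ihM ihP => intro c N; simp [Tm.shiftVar, Tm.substVar, ihM, ihP]
  | pair M P ihM ihP => intro c N; simp [Tm.shiftVar, Tm.substVar, ihM, ihP]
  | proj1 M ih => intro c N; simp [Tm.shiftVar, Tm.substVar, ih]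
  | proj2 M ih => intro c N; simp [Tm.shiftVar, Tm.substVar, ih]
  | tlam M ih => intro c N; simp [Tm.shiftVar, Tm.substVar, ih]
  | tapp M B ih => intro c N; simp [Tm.shiftVar, Tm.substVar, ih]

theorem Tm.substTy_shiftTy (M : Tm) : ∀ (c : ℕ) (B : Ty),
    (M.shiftTy c).substTy c B = M := by
  induction M with
  | var n => intro c B; simp [Tm.shiftTy, Tm.substTy]
  | lam A M ih => intro c B; simp [Tm.shiftTy, Tm.substTy, ih, Ty.subst_shift]
  | app M P ihM ihP => intro c B; simp [Tm.shiftTy, Tm.substTy, ihM, ihP]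
  | pair M P ihM ihP => intro c B; simp [Tm.shiftTy, Tm.substTy, ihM, ihP]
  | proj1 M ih => intro c B; simp [Tm.shiftTy, Tm.substTy, ih]
  | proj2 M ih => intro c B; simp [Tm.shiftTy, Tm.substTy, ih]
  | tlam M ih => intro c B; simp [Tm.shiftTy, Tm.substTy, ih]
  | tapp M C ih => intro c B; simp [Tm.shiftTy, Tm.substTy, ih, Ty.subst_shift]

theorem epsHat_root (M N : Tm) (h : EpsHat M N) :
    ∃ P, Compat RhoHat M P ∧ Compat Beta P N := by
  cases h with
  | imp M C₁ C₂ A P B Q N =>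
    refine ⟨_, Compat.app1 N (Compat.root (RhoHat.imp M C₁ C₂ A P B Q)), ?_⟩
    have := Compat.root (R := Beta) (Beta.imp C₁
      (.app (.tapp (M.shiftVar 0) C₂)
        (.pair (.lam A (.app (P.shiftVar 1) (.var 1)))
               (.lam B (.app (Q.shiftVar 1) (.var 1))))) N)
    convert this using 1
    simp [Tm.substVar, Tm.substVar_shiftVar]
  | conj1 M C₁ C₂ A P B Q =>
    exact ⟨_, Compat.proj1 (Compat.root (RhoHat.conj M C₁ C₂ A P B Q)),
      Compat.root (Beta.conj1 _ _)⟩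
  | conj2 M C₁ C₂ A P B Q =>
    exact ⟨_, Compat.proj2 (Compat.root (RhoHat.conj M C₁ C₂ A P B Q)),
      Compat.root (Beta.conj2 _ _)⟩
  | all M C' A P B Q C'' =>
    refine ⟨_, Compat.tapp C'' (Compat.root (RhoHat.all M C' A P B Q)), ?_⟩
    have := Compat.root (R := Beta) (Beta.all
      (.app (.tapp (M.shiftTy 0) C')
        (.pair (.lam (A.shift 0) (.tapp (P.shiftTy 0) (.var 0)))
               (.lam (B.shift 0) (.tapp (Q.shiftTy 0) (.var 0))))) C'')
    convert this using 1
    simp [Tm.substTy, Tm.substTy_shiftTy, Ty.subst_shift, Ty.subst]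

/-- Every ε̂-step (commuting conversion for the defined disjunction) factors as
exactly one ϱ-step followed by one β-step: if `M →_ε̂ N` then `M →²_{ϱβ} N`. -/
theorem epsHat_subset_rhoHat_then_beta :
    ∀ M N : Tm, Compat EpsHat M N → ∃ P, Compat RhoHat M P ∧ Compat Beta P N := by
  intro M N h
  induction h with
  | root h => exact epsHat_root _ _ h
  | lam A _ ih => obtain ⟨P, h1, h2⟩ := ih; exact ⟨_, Compat.lam A h1, Compat.lam A h2⟩
  | app1 N _ ih => obtain ⟨P, h1, h2⟩ := ih; exact ⟨_, Compat.app1 N h1, Compat.app1 N h2⟩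
  | app2 M _ ih => obtain ⟨P, h1, h2⟩ := ih; exact ⟨_, Compat.app2 M h1, Compat.app2 M h2⟩
  | pair1 N _ ih => obtain ⟨P, h1, h2⟩ := ih; exact ⟨_, Compat.pair1 N h1, Compat.pair1 N h2⟩
  | pair2 M _ ih => obtain ⟨P, h1, h2⟩ := ih; exact ⟨_, Compat.pair2 M h1, Compat.pair2 M h2⟩
  | proj1 _ ih => obtain ⟨P, h1, h2⟩ := ih; exact ⟨_, Compat.proj1 h1, Compat.proj1 h2⟩
  | proj2 _ ih => obtain ⟨P, h1, h2⟩ := ih; exact ⟨_, Compat.proj2 h1, Compat.proj2 h2⟩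
  | tlam _ ih => obtain ⟨P, h1, h2⟩ := ih; exact ⟨_, Compat.tlam h1, Compat.tlam h2⟩
  | tapp B _ ih => obtain ⟨P, h1, h2⟩ := ih; exact ⟨_, Compat.tapp B h1, Compat.tapp B h2⟩
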